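/- arXiv:1209.2932 — 2 statements merged into one kernel-verified Lean document; each statement's English description precedes it below -/
import Mathlib

section
/- Under the stated geometric assumptions, the combined configuration error vector admits the matrix representation e₁₂ = (Q^d₂₁ R₂ᵀ K₁₂ R₁ − R₁ᵀ K₁₂ R₂ Q^d₁₂)^∨, where K₁₂ = kᵅ s₁₂ s₁₂ᵀ + (kᵝ/‖s₁₂₃‖²) s₁₂₃ s₁₂₃ᵀ. -/
noncomputable section
open Matrix

/-- Vectors in ℝ³ with the Euclidean norm. -/
abbrev V3 : Type := EuclideanSpace ℝ (Fin 3)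

/-- Real 3×3 matrices. -/
abbrev M3 : Type := Matrix (Fin 3) (Fin 3) ℝ

/-- The special orthogonal group SO(3): RᵀR = I and det R = 1. -/
def SO3 (R : M3) : Prop := Rᵀ * R = 1 ∧ R.det = 1

/-- Action of a matrix on a vector. -/
def matVec (A : M3) (v : V3) : V3 := WithLp.toLp 2 (A.mulVec v)

/-- Cross product on ℝ³. -/
def cross3 (u v : V3) : V3 :=
  WithLp.toLp 2 ![u 1 * v 2 - u 2 * v 1, u 2 * v 0 - u 0 * v 2, u 0 * v 1 - u 1 * v 0]

/-- The hat map: x̂ y = x × y. -/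
def hat (x : V3) : M3 :=
  !![0, -x 2, x 1; x 2, 0, -x 0; -x 1, x 0, 0]

/-- The vee map, inverse of the hat map on skew-symmetric matrices. -/
def vee (A : M3) : V3 := WithLp.toLp 2 ![A 2 1, A 0 2, A 1 0]

/-- Dot product on ℝ³. -/
def dot3 (u v : V3) : ℝ := u 0 * v 0 + u 1 * v 1 + u 2 * v 2

attribute [local instance] Matrix.normedAddCommGroup Matrix.normedSpace

/-! Rotations commute with the cross product and preserve norms, so `b₁₂₃ = R₁ᵀ s₁₂₃`,
`b₂₁₃ = R₂ᵀ s₂₁₃` and `a₁₂ = ‖s₂₁₃‖ ‖s₁₂₃‖`, while the condition on the normals gives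
`s₂₁₃ = -(‖s₂₁₃‖ / ‖s₁₂₃‖) s₁₂₃`. With `P = Q^d₂₁ R₂ᵀ` and `C = R₁ᵀ` we have `R₂ Q^d₁₂ = Pᵀ`, and each
rank-one term `x xᵀ` of `K₁₂` contributes `P x xᵀ Cᵀ - C x xᵀ Pᵀ = (P x)(C x)ᵀ - (C x)(P x)ᵀ`,
whose vee is `(C x) × (P x)`. -/

lemma SO3.mul_transpose {R : M3} (h : SO3 R) : R * Rᵀ = 1 :=
  mul_eq_one_comm.mp h.1

lemma SO3.transpose {R : M3} (h : SO3 R) : SO3 Rᵀ :=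
  ⟨by rw [transpose_transpose, h.mul_transpose], by rw [det_transpose, h.2]⟩

lemma SO3.adjugate_eq {R : M3} (h : SO3 R) : R.adjugate = Rᵀ := by
  calc R.adjugate = Rᵀ * (R * R.adjugate) := by rw [← Matrix.mul_assoc, h.1, Matrix.one_mul]
    _ = Rᵀ := by rw [mul_adjugate, h.2, one_smul, Matrix.mul_one]

lemma SO3.inner_matVec {R : M3} (h : SO3 R) (u v : V3) :
    inner ℝ (matVec R u) (matVec R v) = inner ℝ u v := by
  simp only [matVec, EuclideanSpace.inner_eq_star_dotProduct, star_trivial]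
  rw [dotProduct_mulVec, ← vecMul_transpose, vecMul_vecMul, h.1, vecMul_one]

lemma SO3.norm_matVec {R : M3} (h : SO3 R) (u : V3) : ‖matVec R u‖ = ‖u‖ := by
  rw [norm_eq_sqrt_real_inner, norm_eq_sqrt_real_inner, h.inner_matVec]

lemma matVec_neg (A : M3) (v : V3) : matVec A (-v) = -matVec A v :=
  map_neg (toEuclideanLin A) v

lemma matVec_smul (A : M3) (c : ℝ) (v : V3) : matVec A (c • v) = c • matVec A v :=
  map_smul (toEuclideanLin A) c v

lemma matVec_matVec (A B : M3) (v : V3) : matVec A (matVec B v) = matVec (A * B) v := by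
  simp only [matVec, mulVec_mulVec]

lemma cross3_eq_crossProduct (u v : V3) : cross3 u v = WithLp.toLp 2 (u.ofLp ⨯₃ v.ofLp) := rfl

lemma neg_cross3 (u v : V3) : -cross3 u v = cross3 v u := by
  rw [cross3_eq_crossProduct, cross3_eq_crossProduct, ← WithLp.toLp_neg, cross_anticomm]

lemma cross3_neg_left (u v : V3) : cross3 (-u) v = -cross3 u v := by
  rw [cross3_eq_crossProduct, cross3_eq_crossProduct, WithLp.ofLp_neg, LinearMap.map_neg₂]; rfl

lemma cross3_smul_left (c : ℝ) (u v : V3) : cross3 (c • u) v = c • cross3 u v := by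
  rw [cross3_eq_crossProduct, cross3_eq_crossProduct, WithLp.ofLp_smul, LinearMap.map_smul₂]; rfl

lemma cross3_matVec_matVec (A : M3) (u v : V3) :
    cross3 (matVec A u) (matVec A v) = matVec A.adjugateᵀ (cross3 u v) := by
  rw [adjugate_fin_three]
  ext i
  fin_cases i <;> simp [cross3, matVec, mulVec, dotProduct, Fin.sum_univ_three] <;> ring

lemma SO3.cross3_matVec_matVec {R : M3} (h : SO3 R) (u v : V3) :
    cross3 (matVec R u) (matVec R v) = matVec R (cross3 u v) := by
  rw [_root_.cross3_matVec_matVec, h.adjugate_eq, transpose_transpose]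

lemma vee_add (A B : M3) : vee (A + B) = vee A + vee B := by
  ext i; fin_cases i <;> rfl

lemma vee_smul (c : ℝ) (A : M3) : vee (c • A) = c • vee A := by
  ext i; fin_cases i <;> rfl

lemma vee_vecMulVec_sub_vecMulVec (u v : V3) :
    vee (vecMulVec u v - vecMulVec v u) = cross3 v u := by
  ext i; fin_cases i <;> simp [vee, cross3, vecMulVec_apply] <;> ring

lemma vee_mul_vecMulVec_mul_transpose_sub (P C : M3) (x : V3) :
    vee (P * vecMulVec x x * Cᵀ - C * vecMulVec x x * Pᵀ) = cross3 (matVec C x) (matVec P x) := by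
  simp only [mul_vecMulVec, vecMulVec_mul, vecMul_transpose]
  exact vee_vecMulVec_sub_vecMulVec (matVec P x) (matVec C x)

lemma vee_mul_smul_vecMulVec_add_mul_transpose_sub (P C : M3) (a b : ℝ) (x y : V3) :
    vee (P * (a • vecMulVec x x + b • vecMulVec y y) * Cᵀ
        - C * (a • vecMulVec x x + b • vecMulVec y y) * Pᵀ)
      = a • cross3 (matVec C x) (matVec P x) + b • cross3 (matVec C y) (matVec P y) := by
  have hsplit : P * (a • vecMulVec x x + b • vecMulVec y y) * Cᵀ
        - C * (a • vecMulVec x x + b • vecMulVec y y) * Pᵀ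
      = a • (P * vecMulVec x x * Cᵀ - C * vecMulVec x x * Pᵀ)
        + b • (P * vecMulVec y y * Cᵀ - C * vecMulVec y y * Pᵀ) := by
    simp only [Matrix.mul_add, Matrix.add_mul, Matrix.mul_smul, Matrix.smul_mul, smul_sub]
    abel
  rw [hsplit, vee_add, vee_smul, vee_smul, vee_mul_vecMulVec_mul_transpose_sub,
    vee_mul_vecMulVec_mul_transpose_sub]

lemma eq_neg_div_norm_smul_of_inv_norm_smul_eq_neg {E : Type*} [NormedAddCommGroup E]
    [NormedSpace ℝ E] {x y : E} (h : ‖y‖⁻¹ • y = -(‖x‖⁻¹ • x)) : y = -(‖y‖ / ‖x‖) • x := by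
  rcases eq_or_ne y 0 with rfl | hy
  · simp
  calc y = ‖y‖ • (‖y‖⁻¹ • y) := by
        rw [smul_smul, mul_inv_cancel₀ (norm_ne_zero_iff.mpr hy), one_smul]
    _ = -(‖y‖ / ‖x‖) • x := by rw [h, smul_neg, smul_smul, neg_smul, div_eq_mul_inv]

theorem error_vector_matrix_form_general
    (s₁₂ s₁₃ s₂₁ s₂₃ : V3)
    (hopp : s₁₂ = -s₂₁)
    (s₁₂₃ s₂₁₃ : V3) (hs₁₂₃ : s₁₂₃ = cross3 s₁₂ s₁₃) (hs₂₁₃ : s₂₁₃ = cross3 s₂₁ s₂₃)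
    (h₂ : s₂₁₃ ≠ 0)
    (hnormal : ‖s₂₁₃‖⁻¹ • s₂₁₃ = -(‖s₁₂₃‖⁻¹ • s₁₂₃))
    (R₁ R₂ : M3) (hR₁ : SO3 R₁) (hR₂ : SO3 R₂)
    (b₁₂ b₁₃ b₂₁ b₂₃ b₁₂₃ b₂₁₃ : V3)
    (hb₁₂ : b₁₂ = matVec R₁ᵀ s₁₂) (hb₁₃ : b₁₃ = matVec R₁ᵀ s₁₃)
    (hb₂₁ : b₂₁ = matVec R₂ᵀ s₂₁) (hb₂₃ : b₂₃ = matVec R₂ᵀ s₂₃)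
    (hb₁₂₃ : b₁₂₃ = cross3 b₁₂ b₁₃) (hb₂₁₃ : b₂₁₃ = cross3 b₂₁ b₂₃)
    (a₁₂ : ℝ) (ha₁₂ : a₁₂ = ‖b₂₁₃‖ * ‖b₁₂₃‖)
    (Qd₁₂ Qd₂₁ : M3) (hQd₂₁ : Qd₂₁ = Qd₁₂ᵀ)
    (kα kβ : ℝ)
    (e₁₂ : V3)
    (he₁₂ : e₁₂ = kα • cross3 (matVec Qd₂₁ b₂₁) b₁₂
        + (kβ / a₁₂) • cross3 (matVec Qd₂₁ b₂₁₃) b₁₂₃)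
    (K : M3)
    (hK : K = kα • vecMulVec s₁₂ s₁₂ + (kβ / ‖s₁₂₃‖ ^ 2) • vecMulVec s₁₂₃ s₁₂₃) :
    e₁₂ = vee (Qd₂₁ * R₂ᵀ * K * R₁ - R₁ᵀ * K * R₂ * Qd₁₂) := by
  obtain rfl : s₂₁ = -s₁₂ := by rw [hopp, neg_neg]
  have hb₁₂₃' : b₁₂₃ = matVec R₁ᵀ s₁₂₃ := by
    rw [hb₁₂₃, hb₁₂, hb₁₃, hs₁₂₃, hR₁.transpose.cross3_matVec_matVec]
  have hb₂₁₃' : b₂₁₃ = matVec R₂ᵀ s₂₁₃ := by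
    rw [hb₂₁₃, hb₂₁, hb₂₃, hs₂₁₃, hR₂.transpose.cross3_matVec_matVec]
  have ha : a₁₂ = ‖s₂₁₃‖ * ‖s₁₂₃‖ := by
    rw [ha₁₂, hb₂₁₃', hb₁₂₃', hR₂.transpose.norm_matVec, hR₁.transpose.norm_matVec]
  have hcoef : kβ / (‖s₂₁₃‖ * ‖s₁₂₃‖) * (‖s₂₁₃‖ / ‖s₁₂₃‖) = kβ / ‖s₁₂₃‖ ^ 2 := by
    rw [div_mul_div_comm, mul_comm kβ, mul_assoc,
      mul_div_mul_left _ _ (norm_ne_zero_iff.mpr h₂), sq]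
  have hM : Qd₂₁ * R₂ᵀ * K * R₁ - R₁ᵀ * K * R₂ * Qd₁₂
      = Qd₂₁ * R₂ᵀ * K * R₁ᵀᵀ - R₁ᵀ * K * (Qd₂₁ * R₂ᵀ)ᵀ := by
    rw [transpose_transpose, transpose_mul, transpose_transpose, hQd₂₁, transpose_transpose,
      Matrix.mul_assoc (R₁ᵀ * K)]
  rw [hM, hK, vee_mul_smul_vecMulVec_add_mul_transpose_sub, he₁₂, hb₂₁₃',
    eq_neg_div_norm_smul_of_inv_norm_smul_eq_neg hnormal, ha, hb₁₂₃', hb₂₁, hb₁₂]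
  simp only [matVec_neg, matVec_smul, matVec_matVec, cross3_neg_left, cross3_smul_left, smul_smul]
  rw [mul_neg, neg_smul, ← smul_neg, neg_cross3, neg_cross3, hcoef]

/-- matrix representation of the combined configuration error vector. -/
theorem error_vector_matrix_form
    (s₁₂ s₁₃ s₂₁ s₂₃ : V3)
    (hs₁₂ : ‖s₁₂‖ = 1) (hs₁₃ : ‖s₁₃‖ = 1) (hs₂₁ : ‖s₂₁‖ = 1) (hs₂₃ : ‖s₂₃‖ = 1)
    (hopp : s₁₂ = -s₂₁)
    (s₁₂₃ s₂₁₃ : V3) (hs₁₂₃ : s₁₂₃ = cross3 s₁₂ s₁₃) (hs₂₁₃ : s₂₁₃ = cross3 s₂₁ s₂₃)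
    (h₁ : s₁₂₃ ≠ 0) (h₂ : s₂₁₃ ≠ 0)
    (hnormal : ‖s₂₁₃‖⁻¹ • s₂₁₃ = -(‖s₁₂₃‖⁻¹ • s₁₂₃))
    (R₁ R₂ : M3) (hR₁ : SO3 R₁) (hR₂ : SO3 R₂)
    (b₁₂ b₁₃ b₂₁ b₂₃ b₁₂₃ b₂₁₃ : V3)
    (hb₁₂ : b₁₂ = matVec R₁ᵀ s₁₂) (hb₁₃ : b₁₃ = matVec R₁ᵀ s₁₃)
    (hb₂₁ : b₂₁ = matVec R₂ᵀ s₂₁) (hb₂₃ : b₂₃ = matVec R₂ᵀ s₂₃)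
    (hb₁₂₃ : b₁₂₃ = cross3 b₁₂ b₁₃) (hb₂₁₃ : b₂₁₃ = cross3 b₂₁ b₂₃)
    (a₁₂ : ℝ) (ha₁₂ : a₁₂ = ‖b₂₁₃‖ * ‖b₁₂₃‖)
    (Qd₁₂ Qd₂₁ : M3) (hQd : SO3 Qd₁₂) (hQd₂₁ : Qd₂₁ = Qd₁₂ᵀ)
    (kα kβ : ℝ) (hkα : 0 < kα) (hkβ : 0 < kβ)
    (e₁₂ : V3)
    (he₁₂ : e₁₂ = kα • cross3 (matVec Qd₂₁ b₂₁) b₁₂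
        + (kβ / a₁₂) • cross3 (matVec Qd₂₁ b₂₁₃) b₁₂₃)
    (K : M3)
    (hK : K = kα • vecMulVec s₁₂ s₁₂ + (kβ / ‖s₁₂₃‖ ^ 2) • vecMulVec s₁₂₃ s₁₂₃) :
    e₁₂ = vee (Qd₂₁ * R₂ᵀ * K * R₁ - R₁ᵀ * K * R₂ * Qd₁₂) :=
  error_vector_matrix_form_general s₁₂ s₁₃ s₂₁ s₂₃ hopp s₁₂₃ s₂₁₃ hs₁₂₃ hs₂₁₃ h₂ hnormal R₁ R₂ hR₁
    hR₂ b₁₂ b₁₃ b₂₁ b₂₃ b₁₂₃ b₂₁₃ hb₁₂ hb₁₃ hb₂₁ hb₂₃ hb₁₂₃ hb₂₁₃ a₁₂ ha₁₂ Qd₁₂ Qd₂₁ hQd₂₁ kα kβ e₁₂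
    he₁₂ K hK
end
end

section
/- Under the stated geometric assumptions with kᵅ ≠ kᵝ, suppose Ψ₁₂ ≤ ψ for a constant ψ < 2 min{kᵅ, kᵝ}. Then Ψ₁₂ is quadratic in ‖e₁₂‖: ψ̲ ‖e₁₂‖² ≤ Ψ₁₂ ≤ ψ̄ ‖e₁₂‖², where ψ̲ = min{kᵅ,kᵝ} / (2 max{(kᵅ)², (kᵝ)², (kᵅ−kᵝ)²} + 2(kᵅ+kᵝ)²) and ψ̄ = min{kᵅ,kᵝ}(kᵅ+kᵝ) / (min{(kᵅ)², (kᵝ)²}·(2 min{kᵅ,kᵝ} − ψ)). -/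
noncomputable section
open Matrix

attribute [local instance] Matrix.normedAddCommGroup Matrix.normedSpace

/-!
In the orthonormal frame `B = [s₁₂, n, s₁₂ × n]`, where `n` is the unit normal of the landmark
plane, `Ψ₁₂ = kα (1 - P₀₀) + kβ (1 - P₁₁)` and
`‖e₁₂‖² = kβ² P₁₂² + kα² P₀₂² + (kβ P₁₀ - kα P₀₁)²` for the rotation
`P = (R₂ᵀ B)ᵀ Q^d₁₂ (R₁ᵀ B)`. If `P` rotates by the angle `θ`, then `tr P = 1 + 2 cos θ` and every
diagonal entry of `P` is at least `cos θ`. Hence `Ψ₁₂` is comparable to `1 - cos θ`, while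
`min{kα, kβ}² sin² θ ≤ ‖e₁₂‖² ≤ 4 max{kα, kβ} Ψ₁₂`. On the sublevel set
`Ψ₁₂ ≤ ψ < 2 min{kα, kβ}` the angle stays away from `π`, so there `1 - cos θ ≲ sin² θ`.
-/

lemma V3.ext3 {u v : V3} (h0 : u 0 = v 0) (h1 : u 1 = v 1) (h2 : u 2 = v 2) : u = v :=
  PiLp.ext fun i => by fin_cases i <;> assumption

@[simp] lemma matVec_apply (A : M3) (v : V3) (i : Fin 3) :
    matVec A v i = A i 0 * v 0 + A i 1 * v 1 + A i 2 * v 2 := by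
  simp [matVec, mulVec, dotProduct, Fin.sum_univ_three]

@[simp] lemma cross3_apply_zero (u v : V3) : cross3 u v 0 = u 1 * v 2 - u 2 * v 1 := rfl

@[simp] lemma cross3_apply_one (u v : V3) : cross3 u v 1 = u 2 * v 0 - u 0 * v 2 := rfl

@[simp] lemma cross3_apply_two (u v : V3) : cross3 u v 2 = u 0 * v 1 - u 1 * v 0 := rfl

lemma norm_sq_eq_dot3 (v : V3) : ‖v‖ ^ 2 = dot3 v v := by
  rw [EuclideanSpace.real_norm_sq_eq, Fin.sum_univ_three, dot3]
  ring

lemma matVec_mul (A B : M3) (v : V3) : matVec (A * B) v = matVec A (matVec B v) := by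
  apply V3.ext3 <;> simp [mul_apply, Fin.sum_univ_three] <;> ring

lemma matVec_add (A : M3) (u v : V3) : matVec A (u + v) = matVec A u + matVec A v := by
  apply V3.ext3 <;> simp <;> ring

lemma cross3_smul_right (c : ℝ) (u v : V3) : cross3 u (c • v) = c • cross3 u v := by
  apply V3.ext3 <;> simp <;> ring

lemma dot3_comm (u v : V3) : dot3 u v = dot3 v u := by
  simp only [dot3]; ring

lemma dot3_neg_left (u v : V3) : dot3 (-u) v = -dot3 u v := by
  simp [dot3]; ring

lemma dot3_smul_left (c : ℝ) (u v : V3) : dot3 (c • u) v = c * dot3 u v := by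
  simp [dot3]; ring

lemma dot3_smul_right (c : ℝ) (u v : V3) : dot3 u (c • v) = c * dot3 u v := by
  simp [dot3]; ring

lemma dot3_cross3_left (u v : V3) : dot3 u (cross3 u v) = 0 := by
  simp [dot3]; ring

lemma dot3_cross3_right (u v : V3) : dot3 v (cross3 u v) = 0 := by
  simp [dot3]; ring

lemma dot3_cross3_self (u v : V3) :
    dot3 (cross3 u v) (cross3 u v) = dot3 u u * dot3 v v - dot3 u v ^ 2 := by
  simp [dot3]; ring

lemma dot3_matVec_left (A : M3) (u v : V3) : dot3 (matVec A u) v = dot3 u (matVec Aᵀ v) := by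
  simp [dot3]; ring

lemma dot3_single_matVec_single (A : M3) (i j : Fin 3) :
    dot3 (EuclideanSpace.single i 1) (matVec A (EuclideanSpace.single j 1)) = A i j := by
  fin_cases i <;> fin_cases j <;> simp [dot3]

lemma dot3_matVec_single_matVec (X Y Q : M3) (i j : Fin 3) :
    dot3 (matVec Y (EuclideanSpace.single i 1)) (matVec Q (matVec X (EuclideanSpace.single j 1)))
      = (Yᵀ * Q * X) i j := by
  rw [dot3_matVec_left, ← matVec_mul, ← matVec_mul, dot3_single_matVec_single]

lemma transpose_mul_of_columns (f : Fin 3 → V3) :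
    (of fun i j => f j i)ᵀ * (of fun i j => f j i) = of fun i j => dot3 (f i) (f j) := by
  ext i j
  simp [mul_apply, Fin.sum_univ_three, dot3]

lemma det_of_columns_cross3 (u v : V3) :
    (of fun i j => ![u, v, cross3 u v] j i).det = dot3 (cross3 u v) (cross3 u v) := by
  simp [det_fin_three, dot3]; ring

namespace SO3

variable {A B P : M3}

lemma mul_transpose_s14 (hA : SO3 A) : A * Aᵀ = 1 := mul_eq_one_comm.mp hA.1

lemma mul (hA : SO3 A) (hB : SO3 B) : SO3 (A * B) := by
  refine ⟨?_, by rw [det_mul, hA.2, hB.2, one_mul]⟩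
  rw [transpose_mul, mul_assoc, ← mul_assoc Aᵀ, hA.1, one_mul, hB.1]

lemma transpose_s14 (hA : SO3 A) : SO3 Aᵀ :=
  ⟨by rw [transpose_transpose, hA.mul_transpose_s14], by rw [det_transpose, hA.2]⟩

lemma adjugate_eq_s14 (hA : SO3 A) : adjugate A = Aᵀ := by
  rw [← mul_one (adjugate A), ← hA.mul_transpose_s14, ← mul_assoc, adjugate_mul, hA.2, one_smul,
    one_mul]

lemma dot3_matVec (hA : SO3 A) (u v : V3) : dot3 (matVec A u) (matVec A v) = dot3 u v := by
  rw [dot3_matVec_left, ← matVec_mul, hA.1]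
  simp [dot3, one_apply]

lemma norm_matVec_s14 (hA : SO3 A) (v : V3) : ‖matVec A v‖ = ‖v‖ := by
  rw [← sq_eq_sq₀ (norm_nonneg _) (norm_nonneg _), norm_sq_eq_dot3, norm_sq_eq_dot3,
    hA.dot3_matVec]

lemma cross3_matVec (hA : SO3 A) (u v : V3) :
    cross3 (matVec A u) (matVec A v) = matVec A (cross3 u v) := by
  have h := hA.adjugate_eq_s14
  rw [adjugate_fin_three, ← Matrix.ext_iff] at h
  simp [Fin.forall_fin_succ] at h
  obtain ⟨⟨h00, h01, h02⟩, ⟨h10, h11, h12⟩, h20, h21, h22⟩ := h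
  apply V3.ext3 <;> simp
  · linear_combination (u 1 * v 2 - u 2 * v 1) * h00 + (u 2 * v 0 - u 0 * v 2) * h10 +
      (u 0 * v 1 - u 1 * v 0) * h20
  · linear_combination (u 1 * v 2 - u 2 * v 1) * h01 + (u 2 * v 0 - u 0 * v 2) * h11 +
      (u 0 * v 1 - u 1 * v 0) * h21
  · linear_combination (u 1 * v 2 - u 2 * v 1) * h02 + (u 2 * v 0 - u 0 * v 2) * h12 +
      (u 0 * v 1 - u 1 * v 0) * h22

lemma matVec_transpose_matVec (hA : SO3 A) (Y Q : M3) (v : V3) :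
    matVec Qᵀ (matVec Y v) = matVec A (matVec (Yᵀ * Q * A)ᵀ v) := by
  rw [← matVec_mul, ← matVec_mul, transpose_mul, transpose_mul, transpose_transpose, ← mul_assoc,
    ← mul_assoc, hA.mul_transpose_s14, one_mul]

lemma row_sq_sum (hP : SO3 P) (i : Fin 3) : P i 0 ^ 2 + P i 1 ^ 2 + P i 2 ^ 2 = 1 := by
  simpa [mul_apply, Fin.sum_univ_three, sq] using congrFun₂ hP.mul_transpose_s14 i i

lemma col_sq_sum (hP : SO3 P) (j : Fin 3) : P 0 j ^ 2 + P 1 j ^ 2 + P 2 j ^ 2 = 1 :=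
  hP.transpose_s14.row_sq_sum j

lemma abs_entry_le_one (hP : SO3 P) (i j : Fin 3) : |P i j| ≤ 1 := by
  rw [← sq_le_one_iff_abs_le_one]
  have := hP.row_sq_sum i
  fin_cases j <;> simp only [Fin.zero_eta, Fin.mk_one, Fin.reduceFinMk] <;>
    linarith [sq_nonneg (P i 0), sq_nonneg (P i 1), sq_nonneg (P i 2)]

lemma entry_le_one (hP : SO3 P) (i j : Fin 3) : P i j ≤ 1 :=
  (abs_le.mp (hP.abs_entry_le_one i j)).2

lemma diag_eq_minor (hP : SO3 P) (i : Fin 3) :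
    P i i = P (i + 1) (i + 1) * P (i + 2) (i + 2) - P (i + 1) (i + 2) * P (i + 2) (i + 1) := by
  have h := congrFun₂ hP.adjugate_eq_s14 i i
  rw [adjugate_fin_three] at h
  fin_cases i <;> simp at h ⊢ <;> linarith

/-- Both sides equal `16 q₀² qᵢ²` for a unit quaternion `q` representing `P`. -/
lemma one_add_trace_mul (hP : SO3 P) (i : Fin 3) :
    (1 + trace P) * (1 + 2 * P i i - trace P) = (P (i + 2) (i + 1) - P (i + 1) (i + 2)) ^ 2 := by
  have hc := hP.col_sq_sum i
  have hr₁ := hP.row_sq_sum (i + 1)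
  have hr₂ := hP.row_sq_sum (i + 2)
  have hd := hP.diag_eq_minor i
  rw [trace_fin_three]
  fin_cases i <;> simp at hc hr₁ hr₂ hd ⊢ <;> linear_combination hc - hr₁ - hr₂ + 2 * hd

lemma skew_sq_sum (hP : SO3 P) :
    (P 2 1 - P 1 2) ^ 2 + (P 0 2 - P 2 0) ^ 2 + (P 1 0 - P 0 1) ^ 2
      = (1 + trace P) * (3 - trace P) := by
  have h₀ := hP.one_add_trace_mul 0
  have h₁ := hP.one_add_trace_mul 1
  have h₂ := hP.one_add_trace_mul 2
  simp only [Fin.isValue, Fin.reduceAdd] at h₀ h₁ h₂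
  rw [trace_fin_three] at *
  linear_combination -(h₀ + h₁ + h₂)

lemma one_add_trace_nonneg (hP : SO3 P) : 0 ≤ 1 + trace P := by
  have h : 4 * (1 + trace P) = (1 + trace P) ^ 2
      + ((P 2 1 - P 1 2) ^ 2 + (P 0 2 - P 2 0) ^ 2 + (P 1 0 - P 0 1) ^ 2) := by
    rw [hP.skew_sq_sum]; ring
  have : 0 ≤ (1 + trace P) ^ 2
      + ((P 2 1 - P 1 2) ^ 2 + (P 0 2 - P 2 0) ^ 2 + (P 1 0 - P 0 1) ^ 2) := by positivity
  linarith

lemma trace_le_one_add_two_mul_diag (hP : SO3 P) (i : Fin 3) : trace P ≤ 1 + 2 * P i i := by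
  rcases hP.one_add_trace_nonneg.eq_or_lt with h | h
  · linarith [(abs_le.mp (hP.abs_entry_le_one i i)).1]
  · have := nonneg_of_mul_nonneg_right ((hP.one_add_trace_mul i).symm ▸ sq_nonneg _) h
    linarith

lemma trace_le_three (hP : SO3 P) : trace P ≤ 3 := by
  rw [trace_fin_three]
  linarith [hP.entry_le_one 0 0, hP.entry_le_one 1 1, hP.entry_le_one 2 2]

end SO3

def framePotential (a b : ℝ) (P : M3) : ℝ := a * (1 - P 0 0) + b * (1 - P 1 1)

def frameErrorSq (a b : ℝ) (P : M3) : ℝ :=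
  b ^ 2 * P 1 2 ^ 2 + a ^ 2 * P 0 2 ^ 2 + (b * P 1 0 - a * P 0 1) ^ 2

namespace SO3

variable {P : M3} {a b : ℝ}

lemma framePotential_nonneg (hP : SO3 P) (ha : 0 ≤ a) (hb : 0 ≤ b) :
    0 ≤ framePotential a b P :=
  add_nonneg (mul_nonneg ha (sub_nonneg.mpr (hP.entry_le_one 0 0)))
    (mul_nonneg hb (sub_nonneg.mpr (hP.entry_le_one 1 1)))

lemma frameErrorSq_le (hP : SO3 P) (a b : ℝ) :
    frameErrorSq a b P ≤ 4 * (a ^ 2 * (1 - P 0 0) + b ^ 2 * (1 - P 1 1)) := by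
  have h₀ := hP.row_sq_sum 0
  have h₁ := hP.row_sq_sum 1
  have key : 4 * (a ^ 2 * (1 - P 0 0) + b ^ 2 * (1 - P 1 1)) - frameErrorSq a b P
      = (b * P 1 0 + a * P 0 1) ^ 2 + b ^ 2 * P 1 2 ^ 2 + a ^ 2 * P 0 2 ^ 2
        + 2 * a ^ 2 * (1 - P 0 0) ^ 2 + 2 * b ^ 2 * (1 - P 1 1) ^ 2 := by
    unfold frameErrorSq
    linear_combination (-2 * a ^ 2) * h₀ + (-2 * b ^ 2) * h₁
  have : 0 ≤ (b * P 1 0 + a * P 0 1) ^ 2 + b ^ 2 * P 1 2 ^ 2 + a ^ 2 * P 0 2 ^ 2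
      + 2 * a ^ 2 * (1 - P 0 0) ^ 2 + 2 * b ^ 2 * (1 - P 1 1) ^ 2 := by positivity
  linarith

lemma min_mul_frameErrorSq_le (hP : SO3 P) (ha : 0 ≤ a) (hb : 0 ≤ b) :
    min a b * frameErrorSq a b P ≤ 4 * a * b * framePotential a b P := by
  have h₀ := mul_nonneg (sq_nonneg a) (sub_nonneg.mpr (hP.entry_le_one 0 0))
  have h₁ := mul_nonneg (sq_nonneg b) (sub_nonneg.mpr (hP.entry_le_one 1 1))
  calc _ ≤ min a b * (4 * (a ^ 2 * (1 - P 0 0) + b ^ 2 * (1 - P 1 1))) :=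
        mul_le_mul_of_nonneg_left (hP.frameErrorSq_le a b) (le_min ha hb)
    _ ≤ _ := by
        unfold framePotential
        linarith [mul_le_mul_of_nonneg_right (min_le_right a b) h₀,
          mul_le_mul_of_nonneg_right (min_le_left a b) h₁]

lemma min_mul_three_sub_trace_le (hP : SO3 P) (ha : 0 ≤ a) (hb : 0 ≤ b) :
    min a b * (3 - trace P) ≤ 2 * framePotential a b P := by
  have h₀ := sub_nonneg.mpr (hP.entry_le_one 0 0)
  have h₁ := sub_nonneg.mpr (hP.entry_le_one 1 1)
  have h₂ := mul_nonneg (le_min ha hb) (sub_nonneg.mpr (hP.trace_le_one_add_two_mul_diag 2))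
  rw [trace_fin_three] at *
  unfold framePotential
  linarith [mul_le_mul_of_nonneg_right (min_le_left a b) h₀,
    mul_le_mul_of_nonneg_right (min_le_right a b) h₁]

lemma two_mul_framePotential_le (hP : SO3 P) (ha : 0 ≤ a) (hb : 0 ≤ b) :
    2 * framePotential a b P ≤ (a + b) * (3 - trace P) := by
  have h₀ := mul_nonneg ha (sub_nonneg.mpr (hP.trace_le_one_add_two_mul_diag 0))
  have h₁ := mul_nonneg hb (sub_nonneg.mpr (hP.trace_le_one_add_two_mul_diag 1))
  unfold framePotential
  linarith

lemma min_sq_mul_le_frameErrorSq (hP : SO3 P) (ha : 0 ≤ a) (hb : 0 ≤ b) :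
    min a b ^ 2 * ((1 + trace P) * (3 - trace P)) ≤ 4 * frameErrorSq a b P := by
  have hr₀ := hP.row_sq_sum 0
  have hr₂ := hP.row_sq_sum 2
  have hc₀ := hP.col_sq_sum 0
  have hc₂ := hP.col_sq_sum 2
  have hm : 0 ≤ min a b := le_min ha hb
  have hma : min a b ^ 2 ≤ a ^ 2 := pow_le_pow_left₀ hm (min_le_left a b) 2
  have hmb : min a b ^ 2 ≤ b ^ 2 := pow_le_pow_left₀ hm (min_le_right a b) 2
  have hmab : min a b ^ 2 ≤ (a + b) ^ 2 :=
    pow_le_pow_left₀ hm (by linarith [min_le_left a b]) 2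
  calc _ = min a b ^ 2 * (P 2 1 - P 1 2) ^ 2 + min a b ^ 2 * (P 0 2 - P 2 0) ^ 2
        + min a b ^ 2 * (P 1 0 - P 0 1) ^ 2 := by rw [← hP.skew_sq_sum]; ring
    _ ≤ b ^ 2 * (P 2 1 - P 1 2) ^ 2 + a ^ 2 * (P 0 2 - P 2 0) ^ 2
        + (a + b) ^ 2 * (P 1 0 - P 0 1) ^ 2 := by gcongr
    _ ≤ b ^ 2 * (P 2 1 - P 1 2) ^ 2 + a ^ 2 * (P 0 2 - P 2 0) ^ 2
        + (a + b) ^ 2 * (P 1 0 - P 0 1) ^ 2 + b ^ 2 * (P 1 2 + P 2 1) ^ 2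
        + a ^ 2 * (P 0 2 + P 2 0) ^ 2 + (b - a) ^ 2 * (P 0 1 + P 1 0) ^ 2 := by
          have : 0 ≤ b ^ 2 * (P 1 2 + P 2 1) ^ 2 + a ^ 2 * (P 0 2 + P 2 0) ^ 2
            + (b - a) ^ 2 * (P 0 1 + P 1 0) ^ 2 := by positivity
          linarith
    -- equal row and column norms give `P₂₁² - P₁₂² = P₀₂² - P₂₀² = P₁₀² - P₀₁²`
    _ = _ := by
          unfold frameErrorSq
          linear_combination (2 * b ^ 2) * (hr₂ - hc₂) + (2 * (b ^ 2 - a ^ 2)) * (hr₀ - hc₀)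

lemma mul_frameErrorSq_le_framePotential (hP : SO3 P) (ha : 0 < a) (hb : 0 < b) :
    (min a b / (2 * max (a ^ 2) (max (b ^ 2) ((a - b) ^ 2)) + 2 * (a + b) ^ 2))
      * frameErrorSq a b P ≤ framePotential a b P := by
  have hD : 4 * a * b ≤ 2 * max (a ^ 2) (max (b ^ 2) ((a - b) ^ 2)) + 2 * (a + b) ^ 2 := by
    linarith [le_max_left (a ^ 2) (max (b ^ 2) ((a - b) ^ 2)), sq_nonneg a, sq_nonneg b]
  rw [div_mul_eq_mul_div, div_le_iff₀ (by positivity)]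
  calc _ ≤ 4 * a * b * framePotential a b P := hP.min_mul_frameErrorSq_le ha.le hb.le
    _ ≤ _ := by
        rw [mul_comm _ (2 * _ + _)]
        exact mul_le_mul_of_nonneg_right hD (hP.framePotential_nonneg ha.le hb.le)

lemma framePotential_le_mul_frameErrorSq (hP : SO3 P) (ha : 0 < a) (hb : 0 < b) {ψ : ℝ}
    (hψ : ψ < 2 * min a b) (hΨψ : framePotential a b P ≤ ψ) :
    framePotential a b P
      ≤ (min a b * (a + b) / (min (a ^ 2) (b ^ 2) * (2 * min a b - ψ))) * frameErrorSq a b P := by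
  have hm : 0 < min a b := lt_min ha hb
  have hgap : 0 < 2 * min a b - ψ := by linarith
  have h3T := sub_nonneg.mpr hP.trace_le_three
  have hcos : 2 * (2 * min a b - ψ) ≤ min a b * (1 + trace P) := by
    linarith [hP.min_mul_three_sub_trace_le ha.le hb.le]
  rw [← pow_left_monotoneOn.map_min ha.le hb.le, div_mul_eq_mul_div, le_div_iff₀ (by positivity)]
  suffices 4 * (framePotential a b P * (min a b ^ 2 * (2 * min a b - ψ)))
      ≤ 4 * (min a b * (a + b) * frameErrorSq a b P) by linarith
  calc _ = min a b ^ 2 * (2 * min a b - ψ) * (2 * framePotential a b P) * 2 := by ring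
    _ ≤ min a b ^ 2 * (2 * min a b - ψ) * ((a + b) * (3 - trace P)) * 2 := by
        gcongr min a b ^ 2 * (2 * min a b - ψ) * ?_ * 2
        exact hP.two_mul_framePotential_le ha.le hb.le
    _ = min a b ^ 2 * (a + b) * (3 - trace P) * (2 * (2 * min a b - ψ)) := by ring
    _ ≤ min a b ^ 2 * (a + b) * (3 - trace P) * (min a b * (1 + trace P)) := by gcongr
    _ = min a b * (a + b) * (min a b ^ 2 * ((1 + trace P) * (3 - trace P))) := by ring
    _ ≤ _ := by
        rw [mul_left_comm 4]
        gcongr min a b * (a + b) * ?_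
        exact hP.min_sq_mul_le_frameErrorSq ha.le hb.le

end SO3

lemma exists_SO3_frame {s n : V3} (hs : dot3 s s = 1) (hn : dot3 n n = 1) (hsn : dot3 s n = 0) :
    ∃ B : M3, SO3 B ∧ matVec B (EuclideanSpace.single 0 1) = s
      ∧ matVec B (EuclideanSpace.single 1 1) = n := by
  have hm : dot3 (cross3 s n) (cross3 s n) = 1 := by
    rw [dot3_cross3_self, hs, hn, hsn]; norm_num
  refine ⟨of fun i j => ![s, n, cross3 s n] j i, ⟨?_, by rw [det_of_columns_cross3, hm]⟩, ?_, ?_⟩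
  · rw [transpose_mul_of_columns]
    ext i j
    fin_cases i <;> fin_cases j <;>
      simp [dot3_comm n s, dot3_comm (cross3 s n), dot3_cross3_left, dot3_cross3_right, hs, hn,
        hsn, hm]
  · apply V3.ext3 <;> simp
  · apply V3.ext3 <;> simp

lemma exists_SO3_frame_of_normal {s₁₂ s₁₃ s₁₂₃ s₂₁₃ : V3} (hs₁₂ : ‖s₁₂‖ = 1)
    (hs₁₂₃ : s₁₂₃ = cross3 s₁₂ s₁₃) (h₁ : s₁₂₃ ≠ 0) (h₂ : s₂₁₃ ≠ 0)
    (hnormal : ‖s₂₁₃‖⁻¹ • s₂₁₃ = -(‖s₁₂₃‖⁻¹ • s₁₂₃)) :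
    ∃ B : M3, SO3 B ∧ s₁₂ = matVec B (EuclideanSpace.single 0 1)
      ∧ s₁₂₃ = ‖s₁₂₃‖ • matVec B (EuclideanSpace.single 1 1)
      ∧ s₂₁₃ = -(‖s₂₁₃‖ • matVec B (EuclideanSpace.single 1 1)) := by
  set n := ‖s₁₂₃‖⁻¹ • s₁₂₃
  have hc₁ : ‖s₁₂₃‖ ≠ 0 := norm_ne_zero_iff.mpr h₁
  have hs : dot3 s₁₂ s₁₂ = 1 := by rw [← norm_sq_eq_dot3, hs₁₂, one_pow]
  have hn : dot3 n n = 1 := by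
    rw [← norm_sq_eq_dot3, norm_smul, norm_inv, norm_norm, inv_mul_cancel₀ hc₁, one_pow]
  have hsn : dot3 s₁₂ n = 0 := by
    rw [dot3_smul_right, hs₁₂₃, dot3_cross3_left, mul_zero]
  obtain ⟨B, hB, hB₀, hB₁⟩ := exists_SO3_frame hs hn hsn
  refine ⟨B, hB, hB₀.symm, ?_, ?_⟩
  · rw [hB₁, smul_inv_smul₀ hc₁]
  · rw [hB₁, ← smul_neg, ← hnormal, smul_inv_smul₀ (norm_ne_zero_iff.mpr h₂)]

def configError (kα kβ : ℝ) (Q : M3) (b₁₂ b₁₂₃ b₂₁ b₂₁₃ : V3) : ℝ :=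
  kα * (1 + dot3 b₂₁ (matVec Q b₁₂))
    + kβ * (1 + (‖b₂₁₃‖ * ‖b₁₂₃‖)⁻¹ * dot3 b₂₁₃ (matVec Q b₁₂₃))

def errorVector (kα kβ : ℝ) (Q : M3) (b₁₂ b₁₂₃ b₂₁ b₂₁₃ : V3) : V3 :=
  kα • cross3 (matVec Qᵀ b₂₁) b₁₂ + (kβ / (‖b₂₁₃‖ * ‖b₁₂₃‖)) • cross3 (matVec Qᵀ b₂₁₃) b₁₂₃

lemma configError_of_frame {X Y : M3} (hX : SO3 X) (hY : SO3 Y) (Q : M3) {c₁ c₂ : ℝ}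
    (hc₁ : 0 < c₁) (hc₂ : 0 < c₂) (kα kβ : ℝ) :
    configError kα kβ Q (matVec X (EuclideanSpace.single 0 1))
        (c₁ • matVec X (EuclideanSpace.single 1 1)) (-matVec Y (EuclideanSpace.single 0 1))
        (-(c₂ • matVec Y (EuclideanSpace.single 1 1)))
      = framePotential kα kβ (Yᵀ * Q * X) := by
  simp only [configError, framePotential, norm_neg, norm_smul, Real.norm_eq_abs, abs_of_pos hc₁,
    abs_of_pos hc₂, hX.norm_matVec_s14, hY.norm_matVec_s14, PiLp.norm_single, norm_one, mul_one,
    matVec_smul, dot3_neg_left, dot3_smul_left, dot3_smul_right, dot3_matVec_single_matVec]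
  field_simp
  ring

lemma norm_sq_errorVector_of_frame {X Y : M3} (hX : SO3 X) (hY : SO3 Y) (Q : M3) {c₁ c₂ : ℝ}
    (hc₁ : 0 < c₁) (hc₂ : 0 < c₂) (kα kβ : ℝ) :
    ‖errorVector kα kβ Q (matVec X (EuclideanSpace.single 0 1))
        (c₁ • matVec X (EuclideanSpace.single 1 1)) (-matVec Y (EuclideanSpace.single 0 1))
        (-(c₂ • matVec Y (EuclideanSpace.single 1 1)))‖ ^ 2
      = frameErrorSq kα kβ (Yᵀ * Q * X) := by
  set P := Yᵀ * Q * X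
  have hframe : errorVector kα kβ Q (matVec X (EuclideanSpace.single 0 1))
      (c₁ • matVec X (EuclideanSpace.single 1 1)) (-matVec Y (EuclideanSpace.single 0 1))
      (-(c₂ • matVec Y (EuclideanSpace.single 1 1)))
      = -matVec X (kα • cross3 (matVec Pᵀ (EuclideanSpace.single 0 1)) (EuclideanSpace.single 0 1)
          + kβ • cross3 (matVec Pᵀ (EuclideanSpace.single 1 1)) (EuclideanSpace.single 1 1)) := by
    simp only [errorVector, norm_neg, norm_smul, Real.norm_eq_abs, abs_of_pos hc₁, abs_of_pos hc₂,
      hX.norm_matVec_s14, hY.norm_matVec_s14, PiLp.norm_single, norm_one, mul_one, matVec_neg,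
      matVec_smul, hX.matVec_transpose_matVec, cross3_neg_left, cross3_smul_left,
      cross3_smul_right, hX.cross3_matVec, matVec_add]
    match_scalars <;> field_simp
  rw [hframe, norm_neg, hX.norm_matVec_s14, norm_sq_eq_dot3]
  simp [dot3, frameErrorSq]
  ring

theorem Psi_quadratic_bounds_general
    (s₁₂ s₁₃ s₂₁ s₂₃ : V3)
    (hs₁₂ : ‖s₁₂‖ = 1)
    (hopp : s₁₂ = -s₂₁)
    (s₁₂₃ s₂₁₃ : V3) (hs₁₂₃ : s₁₂₃ = cross3 s₁₂ s₁₃) (hs₂₁₃ : s₂₁₃ = cross3 s₂₁ s₂₃)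
    (h₁ : s₁₂₃ ≠ 0) (h₂ : s₂₁₃ ≠ 0)
    (hnormal : ‖s₂₁₃‖⁻¹ • s₂₁₃ = -(‖s₁₂₃‖⁻¹ • s₁₂₃))
    (R₁ R₂ : M3) (hR₁ : SO3 R₁) (hR₂ : SO3 R₂)
    (b₁₂ b₁₃ b₂₁ b₂₃ b₁₂₃ b₂₁₃ : V3)
    (hb₁₂ : b₁₂ = matVec R₁ᵀ s₁₂) (hb₁₃ : b₁₃ = matVec R₁ᵀ s₁₃)
    (hb₂₁ : b₂₁ = matVec R₂ᵀ s₂₁) (hb₂₃ : b₂₃ = matVec R₂ᵀ s₂₃)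
    (hb₁₂₃ : b₁₂₃ = cross3 b₁₂ b₁₃) (hb₂₁₃ : b₂₁₃ = cross3 b₂₁ b₂₃)
    (a₁₂ : ℝ) (ha₁₂ : a₁₂ = ‖b₂₁₃‖ * ‖b₁₂₃‖)
    (Qd₁₂ Qd₂₁ : M3) (hQd : SO3 Qd₁₂) (hQd₂₁ : Qd₂₁ = Qd₁₂ᵀ)
    (kα kβ : ℝ) (hkα : 0 < kα) (hkβ : 0 < kβ)
    (Ψ : ℝ)
    (hΨ : Ψ = kα * (1 + dot3 b₂₁ (matVec Qd₁₂ b₁₂))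
        + kβ * (1 + a₁₂⁻¹ * dot3 b₂₁₃ (matVec Qd₁₂ b₁₂₃)))
    (e₁₂ : V3)
    (he₁₂ : e₁₂ = kα • cross3 (matVec Qd₂₁ b₂₁) b₁₂
        + (kβ / a₁₂) • cross3 (matVec Qd₂₁ b₂₁₃) b₁₂₃)
    (ψ : ℝ) (hψ : ψ < 2 * min kα kβ) (hΨψ : Ψ ≤ ψ) :
    (min kα kβ / (2 * max (kα ^ 2) (max (kβ ^ 2) ((kα - kβ) ^ 2))
        + 2 * (kα + kβ) ^ 2)) * ‖e₁₂‖ ^ 2 ≤ Ψ ∧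
      Ψ ≤ (min kα kβ * (kα + kβ) / (min (kα ^ 2) (kβ ^ 2)
        * (2 * min kα kβ - ψ))) * ‖e₁₂‖ ^ 2 := by
  obtain ⟨B, hB, hs₁₂B, hs₁₂₃B, hs₂₁₃B⟩ := exists_SO3_frame_of_normal hs₁₂ hs₁₂₃ h₁ h₂ hnormal
  have hX : SO3 (R₁ᵀ * B) := hR₁.transpose_s14.mul hB
  have hY : SO3 (R₂ᵀ * B) := hR₂.transpose_s14.mul hB
  have hb₁₂' : b₁₂ = matVec (R₁ᵀ * B) (EuclideanSpace.single 0 1) := by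
    rw [hb₁₂, hs₁₂B, matVec_mul]
  have hb₂₁' : b₂₁ = -matVec (R₂ᵀ * B) (EuclideanSpace.single 0 1) := by
    rw [hb₂₁, ← neg_neg s₂₁, ← hopp, hs₁₂B, matVec_neg, matVec_mul]
  have hb₁₂₃' : b₁₂₃ = ‖s₁₂₃‖ • matVec (R₁ᵀ * B) (EuclideanSpace.single 1 1) := by
    rw [hb₁₂₃, hb₁₂, hb₁₃, hR₁.transpose_s14.cross3_matVec, ← hs₁₂₃, matVec_mul, ← matVec_smul,
      ← hs₁₂₃B]
  have hb₂₁₃' : b₂₁₃ = -(‖s₂₁₃‖ • matVec (R₂ᵀ * B) (EuclideanSpace.single 1 1)) := by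
    rw [hb₂₁₃, hb₂₁, hb₂₃, hR₂.transpose_s14.cross3_matVec, ← hs₂₁₃, matVec_mul, ← matVec_smul,
      ← matVec_neg, ← hs₂₁₃B]
  have hc₁ := norm_pos_iff.mpr h₁
  have hc₂ := norm_pos_iff.mpr h₂
  have hΨP : Ψ = framePotential kα kβ ((R₂ᵀ * B)ᵀ * Qd₁₂ * (R₁ᵀ * B)) := by
    rw [← configError_of_frame hX hY Qd₁₂ hc₁ hc₂, ← hb₁₂', ← hb₁₂₃', ← hb₂₁', ← hb₂₁₃', hΨ, ha₁₂]
    rfl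
  have heP : ‖e₁₂‖ ^ 2 = frameErrorSq kα kβ ((R₂ᵀ * B)ᵀ * Qd₁₂ * (R₁ᵀ * B)) := by
    rw [← norm_sq_errorVector_of_frame hX hY Qd₁₂ hc₁ hc₂, ← hb₁₂', ← hb₁₂₃', ← hb₂₁', ← hb₂₁₃',
      he₁₂, ha₁₂, hQd₂₁]
    rfl
  have hP : SO3 ((R₂ᵀ * B)ᵀ * Qd₁₂ * (R₁ᵀ * B)) := (hY.transpose_s14.mul hQd).mul hX
  rw [hΨP] at hΨψ ⊢
  rw [heP]
  exact ⟨hP.mul_frameErrorSq_le_framePotential hkα hkβ,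
    hP.framePotential_le_mul_frameErrorSq hkα hkβ hψ hΨψ⟩

/-- the configuration error function is quadratic in ‖e₁₂‖ on the
sublevel set Ψ₁₂ ≤ ψ < 2 min{kᵅ, kᵝ}. -/
theorem Psi_quadratic_bounds
    (s₁₂ s₁₃ s₂₁ s₂₃ : V3)
    (hs₁₂ : ‖s₁₂‖ = 1) (hs₁₃ : ‖s₁₃‖ = 1) (hs₂₁ : ‖s₂₁‖ = 1) (hs₂₃ : ‖s₂₃‖ = 1)
    (hopp : s₁₂ = -s₂₁)
    (s₁₂₃ s₂₁₃ : V3) (hs₁₂₃ : s₁₂₃ = cross3 s₁₂ s₁₃) (hs₂₁₃ : s₂₁₃ = cross3 s₂₁ s₂₃)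
    (h₁ : s₁₂₃ ≠ 0) (h₂ : s₂₁₃ ≠ 0)
    (hnormal : ‖s₂₁₃‖⁻¹ • s₂₁₃ = -(‖s₁₂₃‖⁻¹ • s₁₂₃))
    (R₁ R₂ : M3) (hR₁ : SO3 R₁) (hR₂ : SO3 R₂)
    (b₁₂ b₁₃ b₂₁ b₂₃ b₁₂₃ b₂₁₃ : V3)
    (hb₁₂ : b₁₂ = matVec R₁ᵀ s₁₂) (hb₁₃ : b₁₃ = matVec R₁ᵀ s₁₃)
    (hb₂₁ : b₂₁ = matVec R₂ᵀ s₂₁) (hb₂₃ : b₂₃ = matVec R₂ᵀ s₂₃)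
    (hb₁₂₃ : b₁₂₃ = cross3 b₁₂ b₁₃) (hb₂₁₃ : b₂₁₃ = cross3 b₂₁ b₂₃)
    (a₁₂ : ℝ) (ha₁₂ : a₁₂ = ‖b₂₁₃‖ * ‖b₁₂₃‖)
    (Qd₁₂ Qd₂₁ : M3) (hQd : SO3 Qd₁₂) (hQd₂₁ : Qd₂₁ = Qd₁₂ᵀ)
    (kα kβ : ℝ) (hkα : 0 < kα) (hkβ : 0 < kβ)
    (hkαβ : kα ≠ kβ)
    (Ψ : ℝ)
    (hΨ : Ψ = kα * (1 + dot3 b₂₁ (matVec Qd₁₂ b₁₂))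
        + kβ * (1 + a₁₂⁻¹ * dot3 b₂₁₃ (matVec Qd₁₂ b₁₂₃)))
    (e₁₂ : V3)
    (he₁₂ : e₁₂ = kα • cross3 (matVec Qd₂₁ b₂₁) b₁₂
        + (kβ / a₁₂) • cross3 (matVec Qd₂₁ b₂₁₃) b₁₂₃)
    (ψ : ℝ) (hψ : ψ < 2 * min kα kβ) (hΨψ : Ψ ≤ ψ) :
    (min kα kβ / (2 * max (kα ^ 2) (max (kβ ^ 2) ((kα - kβ) ^ 2))
        + 2 * (kα + kβ) ^ 2)) * ‖e₁₂‖ ^ 2 ≤ Ψ ∧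
      Ψ ≤ (min kα kβ * (kα + kβ) / (min (kα ^ 2) (kβ ^ 2)
        * (2 * min kα kβ - ψ))) * ‖e₁₂‖ ^ 2 :=
  Psi_quadratic_bounds_general s₁₂ s₁₃ s₂₁ s₂₃ hs₁₂ hopp s₁₂₃ s₂₁₃ hs₁₂₃ hs₂₁₃ h₁ h₂ hnormal R₁ R₂
    hR₁ hR₂ b₁₂ b₁₃ b₂₁ b₂₃ b₁₂₃ b₂₁₃ hb₁₂ hb₁₃ hb₂₁ hb₂₃ hb₁₂₃ hb₂₁₃ a₁₂ ha₁₂ Qd₁₂ Qd₂₁ hQd hQd₂₁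
    kα kβ hkα hkβ Ψ hΨ e₁₂ he₁₂ ψ hψ hΨψ
end
end
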